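/- In the UL-flexibility polytope, constraints u_k and l_{T−k+i} cannot be simultaneously and non-redundantly active: if a non-increasing p ∈ F(u,l) satisfies Δt·∑_{j=1}^k p_j = u_k and Δt·∑_{j=k−i+1}^T p_j = l_{T−k+i} for some 1 ≤ i ≤ k, then u_k − u_{k−i} = l_{T−k+i} − l_{T−k}, Δt·∑_{j=1}^{k−i} p_j = u_{k−i}, and Δt·∑_{j=k+1}^T p_j = l_{T−k}. -/

import Mathlib

open Finset

noncomputable section

/-- The UL-flexibility set: all signals `p` such that for every nonempty
subset `S` of time indices with `|S| = k`, `l k ≤ Δt * ∑_{t∈S} p t ≤ u k`. -/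
def ULset (T : ℕ) (Δt : ℝ) (u l : ℕ → ℝ) : Set (Fin T → ℝ) :=
  {p | ∀ S : Finset (Fin T), S.Nonempty →
    l S.card ≤ Δt * ∑ t ∈ S, p t ∧ Δt * ∑ t ∈ S, p t ≤ u S.card}

/-- Zero extension of a parameter vector: value 0 at index 0. -/
def ZExt (v : ℕ → ℝ) : ℕ → ℝ := fun k => if k = 0 then 0 else v k

/-- Valid UL parameters: the zero-extension of `u` is concave, nonnegative and
increasing; the zero-extension of `l` is convex, nonnegative and increasing; and
the zero-extension of `u` plus the reversed zero-extension of `l` is increasing. -/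
def ValidUL (T : ℕ) (u l : ℕ → ℝ) : Prop :=
  (∀ j, 1 ≤ j → j + 1 ≤ T → ZExt u (j - 1) + ZExt u (j + 1) ≤ 2 * ZExt u j) ∧
  (∀ k, k ≤ T → 0 ≤ ZExt u k) ∧
  (∀ j, j + 1 ≤ T → ZExt u j ≤ ZExt u (j + 1)) ∧
  (∀ j, 1 ≤ j → j + 1 ≤ T → 2 * ZExt l j ≤ ZExt l (j - 1) + ZExt l (j + 1)) ∧
  (∀ k, k ≤ T → 0 ≤ ZExt l k) ∧
  (∀ j, j + 1 ≤ T → ZExt l j ≤ ZExt l (j + 1)) ∧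
  (∀ j, 1 ≤ j → j ≤ T →
    ZExt l (T - j + 1) - ZExt l (T - j) ≤ ZExt u j - ZExt u (j - 1))

/-- Vertex candidate `p^(k)` (0-based time index `t` corresponds to paper index `t+1`). -/
def ULvertex (T : ℕ) (Δt : ℝ) (u l : ℕ → ℝ) (k : ℕ) : Fin T → ℝ :=
  fun t => if (t : ℕ) < k then (ZExt u ((t : ℕ) + 1) - ZExt u (t : ℕ)) / Δt
           else (ZExt l (T - (t : ℕ)) - ZExt l (T - (t : ℕ) - 1)) / Δt


/-! Splitting the prefix `[0, k)` and the suffix `[k - i, T)` at their common block `[k - i, k)`,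
the two active constraints give `u k - l (T - k + i) = Δt * (∑_{j < k - i} p j - ∑_{j ≥ k} p j)`,
which the outer UL-bounds on the two remaining blocks make at most `u (k - i) - l (T - k)`.
Telescoping the last validity condition over `k - i < j ≤ k` gives the reverse inequality,
so all three inequalities are equalities. -/

theorem ZExt_of_ne_zero {v : ℕ → ℝ} {k : ℕ} (hk : k ≠ 0) : ZExt v k = v k := if_neg hk

theorem Fin.card_filter_le_val {n m : ℕ} (hm : m ≤ n) : #{i : Fin n | m ≤ (i : ℕ)} = n - m := by
  have hsplit := card_filter_add_card_filter_not (s := univ) (p := fun i : Fin n => (i : ℕ) < m)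
  simp only [Fin.card_filter_val_lt, not_lt, card_univ, Fintype.card_fin] at hsplit
  omega

theorem Fin.sum_filter_val_lt_add {M : Type*} [AddCommMonoid M] {n m k : ℕ} (f : Fin n → M)
    (hmk : m ≤ k) :
    ∑ j : Fin n with j.val < m, f j + ∑ j : Fin n with m ≤ j.val ∧ j.val < k, f j
      = ∑ j : Fin n with j.val < k, f j := by
  rw [← sum_union (disjoint_filter.2 fun _ _ _ => by omega)]
  exact sum_congr (by ext; simp only [mem_union, mem_filter, mem_univ, true_and]; omega)
    fun _ _ => rfl

theorem Fin.sum_filter_le_val_add {M : Type*} [AddCommMonoid M] {n m k : ℕ} (f : Fin n → M)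
    (hmk : m ≤ k) :
    ∑ j : Fin n with m ≤ j.val ∧ j.val < k, f j + ∑ j : Fin n with k ≤ j.val, f j
      = ∑ j : Fin n with m ≤ j.val, f j := by
  rw [← sum_union (disjoint_filter.2 fun _ _ _ => by omega)]
  exact sum_congr (by ext; simp only [mem_union, mem_filter, mem_univ, true_and]; omega)
    fun _ _ => rfl

namespace ULset

variable {T : ℕ} {Δt : ℝ} {u l : ℕ → ℝ} {p : Fin T → ℝ}

theorem zext_le_sum (hp : p ∈ ULset T Δt u l) (S : Finset (Fin T)) :
    ZExt l #S ≤ Δt * ∑ t ∈ S, p t := by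
  rcases S.eq_empty_or_nonempty with rfl | hS
  · simp [ZExt]
  · rw [ZExt_of_ne_zero hS.card_pos.ne']
    exact (hp S hS).1

theorem sum_le_zext (hp : p ∈ ULset T Δt u l) (S : Finset (Fin T)) :
    Δt * ∑ t ∈ S, p t ≤ ZExt u #S := by
  rcases S.eq_empty_or_nonempty with rfl | hS
  · simp [ZExt]
  · rw [ZExt_of_ne_zero hS.card_pos.ne']
    exact (hp S hS).2

end ULset

theorem ValidUL.zext_sub_le_zext_sub {T : ℕ} {u l : ℕ → ℝ} (hvalid : ValidUL T u l) {i k : ℕ}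
    (hik : i ≤ k) (hkT : k ≤ T) :
    ZExt l (T - k + i) - ZExt l (T - k) ≤ ZExt u k - ZExt u (k - i) := by
  induction i with
  | zero => simp
  | succ i ih =>
    have hstep := hvalid.2.2.2.2.2.2 (k - i) (by omega) (by omega)
    rw [show T - (k - i) + 1 = T - k + (i + 1) by omega, show T - (k - i) = T - k + i by omega,
      show k - i - 1 = k - (i + 1) by omega] at hstep
    linarith [ih (by omega)]

theorem simultaneous_active_constraints_general (T : ℕ) (Δt : ℝ)
    (u l : ℕ → ℝ) (hvalid : ValidUL T u l)
    (p : Fin T → ℝ) (hp : p ∈ ULset T Δt u l)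
    (k i : ℕ) (hi1 : 1 ≤ i) (hik : i ≤ k) (hkT : k ≤ T)
    (hu : Δt * ∑ j ∈ Finset.univ.filter (fun j : Fin T => (j : ℕ) < k), p j = u k)
    (hl : Δt * ∑ j ∈ Finset.univ.filter (fun j : Fin T => k - i ≤ (j : ℕ)), p j
            = l (T - k + i)) :
    ZExt u k - ZExt u (k - i) = ZExt l (T - k + i) - ZExt l (T - k) ∧
    Δt * ∑ j ∈ Finset.univ.filter (fun j : Fin T => (j : ℕ) < k - i), p j = ZExt u (k - i) ∧
    Δt * ∑ j ∈ Finset.univ.filter (fun j : Fin T => k ≤ (j : ℕ)), p j = ZExt l (T - k) := by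
  rw [← Fin.sum_filter_val_lt_add p (Nat.sub_le k i), mul_add] at hu
  rw [← Fin.sum_filter_le_val_add p (Nat.sub_le k i), mul_add] at hl
  have hprefix := ULset.sum_le_zext hp (univ.filter fun j : Fin T => (j : ℕ) < k - i)
  have hsuffix := ULset.zext_le_sum hp (univ.filter fun j : Fin T => k ≤ (j : ℕ))
  rw [Fin.card_filter_val_lt, min_eq_right (by omega)] at hprefix
  rw [Fin.card_filter_le_val hkT] at hsuffix
  have hincrements := hvalid.zext_sub_le_zext_sub hik hkT
  rw [ZExt_of_ne_zero (by omega : k ≠ 0), ZExt_of_ne_zero (by omega : T - k + i ≠ 0)]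
    at hincrements ⊢
  refine ⟨by linarith, by linarith, by linarith⟩

/-- If a non-increasing `p ∈ F(u,l)` has constraints `u k`
(prefix of length `k`) and `l (T-k+i)` (suffix of length `T-k+i`, i.e. paper
indices `k-i+1,…,T`) simultaneously active for some `1 ≤ i ≤ k`, then
`u k - u (k-i) = l (T-k+i) - l (T-k)`, the prefix of length `k-i` is exactly
`u (k-i)`, and the suffix of length `T-k` is exactly `l (T-k)`. -/
theorem simultaneous_active_constraints (T : ℕ) (hT : 1 ≤ T) (Δt : ℝ) (hΔt : 0 < Δt)
    (u l : ℕ → ℝ) (hvalid : ValidUL T u l)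
    (p : Fin T → ℝ) (hmono : Antitone p) (hp : p ∈ ULset T Δt u l)
    (k i : ℕ) (hi1 : 1 ≤ i) (hik : i ≤ k) (hkT : k ≤ T)
    (hu : Δt * ∑ j ∈ Finset.univ.filter (fun j : Fin T => (j : ℕ) < k), p j = u k)
    (hl : Δt * ∑ j ∈ Finset.univ.filter (fun j : Fin T => k - i ≤ (j : ℕ)), p j
            = l (T - k + i)) :
    ZExt u k - ZExt u (k - i) = ZExt l (T - k + i) - ZExt l (T - k) ∧
    Δt * ∑ j ∈ Finset.univ.filter (fun j : Fin T => (j : ℕ) < k - i), p j = ZExt u (k - i) ∧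
    Δt * ∑ j ∈ Finset.univ.filter (fun j : Fin T => k ≤ (j : ℕ)), p j = ZExt l (T - k) :=
  simultaneous_active_constraints_general T Δt u l hvalid p hp k i hi1 hik hkT hu hl
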